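/- Define a(v) = γ_{d(δ,v)}(ω_a) and b(v) = γ_{d(δ,v)}(ω_b) on the infinite p-ary tree, where d(δ,v) is the distance from the root and γ is a minimal resolution. Then a and b are weight functions with weights ω_a, ω_b respectively, and ⟨a, b⟩ = Σ_{i=0}^∞ p^i γ_i(ω_a) γ_i(ω_b); hence the lower bound ⟨a,b⟩ ≥ Σ p^i γ_i(ω_a)γ_i(ω_b) is sharp. -/

import Mathlib

/-!
Depth functions inherit everything from the resolution: a path meets each depth once, so its
weight is `Σ γ_i = ω`, and a vertex at depth `i` has `p` children, so domination is
`p γ_{i+1} ≤ γ_i`. Grouping the words by length, of which there are `p^i` of length `i`,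
turns the inner product into `Σ p^i γa_i γb_i`.
-/

open scoped ENNReal

/-- A resolution of a real `ω ≥ 0`: a sequence `(γ_i)` with values in `{0} ∪ [1, ∞)`
such that `γ_i ≥ p·γ_{i+1}` for all `i` and `Σ γ_i = ω`. -/
def IsResolution (p : ℕ) (ω : ℝ) (γ : ℕ → ℝ) : Prop :=
  (∀ i, γ i = 0 ∨ 1 ≤ γ i) ∧ (∀ i, (p : ℝ) * γ (i + 1) ≤ γ i) ∧ HasSum γ ω

/-- Lexicographic comparison of sequences: `γ ≤ γ'` iff they are equal or `γ` is
strictly smaller at the first index where they differ. -/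
def LexLE (γ γ' : ℕ → ℝ) : Prop :=
  γ = γ' ∨ ∃ i, (∀ j < i, γ j = γ' j) ∧ γ i < γ' i

/-- Vertices of the infinite rooted `p`-ary tree are finite words over `Fin p`;
the root is the empty word `[]` and the children of `v` are the words `v ++ [i]`.
`pathVertex p T n` is the vertex at depth `n` along the infinite path determined
by `T : ℕ → Fin p`. -/
def pathVertex (p : ℕ) (T : ℕ → Fin p) (n : ℕ) : List (Fin p) :=
  (List.range n).map fun j => T j

/-- A weight function with weight `ω` on the infinite `p`-ary tree: its values lie in
`{0} ∪ [1, ∞)`, every infinite path from the root has total weight at least `ω`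
(sums taken in `ℝ≥0∞`), and the value at each vertex dominates the sum of the values
at its children. -/
def IsWeight (p : ℕ) (ω : ℝ) (a : List (Fin p) → ℝ) : Prop :=
  (∀ v, a v = 0 ∨ 1 ≤ a v) ∧
  (∀ T : ℕ → Fin p, ENNReal.ofReal ω ≤ ∑' n : ℕ, ENNReal.ofReal (a (pathVertex p T n))) ∧
  (∀ v : List (Fin p), ∑ i : Fin p, a (v ++ [i]) ≤ a v)

theorem length_pathVertex (p : ℕ) (T : ℕ → Fin p) (n : ℕ) :
    (pathVertex p T n).length = n := by
  simp [pathVertex]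

theorem ENNReal.tsum_comp_length {α : Type*} [Fintype α] (f : ℕ → ℝ≥0∞) :
    ∑' v : List α, f v.length = ∑' n, (Fintype.card α : ℝ≥0∞) ^ n * f n := by
  rw [← (Equiv.sigmaFiberEquiv (List.length : List α → ℕ)).tsum_eq, ENNReal.tsum_sigma']
  refine tsum_congr fun n => ?_
  let : Fintype {v : List α // v.length = n} := inferInstanceAs (Fintype (List.Vector α n))
  have hcard : Fintype.card {v : List α // v.length = n} = Fintype.card α ^ n :=
    card_vector n
  have hconst (v : {v : List α // v.length = n}) : f (v : List α).length = f n := by rw [v.2]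
  simp only [Equiv.sigmaFiberEquiv, Equiv.coe_fn_mk, tsum_fintype, hconst, Finset.sum_const,
    Finset.card_univ, hcard, nsmul_eq_mul, Nat.cast_pow]

namespace IsResolution

variable {p : ℕ} {ω : ℝ} {γ : ℕ → ℝ}

theorem nonneg (h : IsResolution p ω γ) (i : ℕ) : 0 ≤ γ i :=
  (h.1 i).elim (·.ge) zero_le_one.trans

theorem isWeight_comp_length (h : IsResolution p ω γ) :
    IsWeight p ω (fun v => γ v.length) := by
  have hnonneg := h.nonneg
  obtain ⟨hvals, hdom, hsum⟩ := h
  refine ⟨fun v => hvals _, fun T => ?_, fun v => ?_⟩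
  · simp only [length_pathVertex]
    rw [← hsum.tsum_eq, ENNReal.ofReal_tsum_of_nonneg hnonneg hsum.summable]
  · simpa [mul_comm] using hdom v.length

end IsResolution

theorem depth_weight_functions_sharp_general (p : ℕ) (ωa ωb : ℝ) (γa γb : ℕ → ℝ)
    (hra : IsResolution p ωa γa) (hrb : IsResolution p ωb γb) :
    IsWeight p ωa (fun v => γa v.length) ∧
    IsWeight p ωb (fun v => γb v.length) ∧
    ∑' v : List (Fin p), ENNReal.ofReal (γa v.length * γb v.length) =
      ∑' i : ℕ, ENNReal.ofReal ((p : ℝ) ^ i * γa i * γb i) := by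
  refine ⟨hra.isWeight_comp_length, hrb.isWeight_comp_length, ?_⟩
  rw [ENNReal.tsum_comp_length (fun n => ENNReal.ofReal (γa n * γb n)), Fintype.card_fin]
  refine tsum_congr fun i => ?_
  rw [mul_assoc, ENNReal.ofReal_mul (pow_nonneg p.cast_nonneg i),
    ENNReal.ofReal_pow p.cast_nonneg, ENNReal.ofReal_natCast]

/-- Let `γa, γb` be minimal resolutions of `ω_a, ω_b` and define
`a(v) = γa_{d(δ,v)}`, `b(v) = γb_{d(δ,v)}` on the infinite `p`-ary tree, where the
distance from the root is the length of the word `v`.  Then `a` and `b` are weight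
functions with weights `ω_a, ω_b`, and `⟨a, b⟩ = Σ_{i=0}^∞ p^i γa_i γb_i`; hence the
lower bound `⟨a,b⟩ ≥ Σ p^i γ_i(ω_a)γ_i(ω_b)` is sharp. -/
theorem depth_weight_functions_sharp (p : ℕ) (hp : p.Prime) (ωa ωb : ℝ)
    (hωa : 0 ≤ ωa) (hωb : 0 ≤ ωb) (γa γb : ℕ → ℝ)
    (hra : IsResolution p ωa γa) (hmina : ∀ g, IsResolution p ωa g → LexLE γa g)
    (hrb : IsResolution p ωb γb) (hminb : ∀ g, IsResolution p ωb g → LexLE γb g) :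
    IsWeight p ωa (fun v => γa v.length) ∧
    IsWeight p ωb (fun v => γb v.length) ∧
    ∑' v : List (Fin p), ENNReal.ofReal (γa v.length * γb v.length) =
      ∑' i : ℕ, ENNReal.ofReal ((p : ℝ) ^ i * γa i * γb i) :=
  depth_weight_functions_sharp_general p ωa ωb γa γb hra hrb
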